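/- For any positive integer a and any n ≥ 1, P(n + φ(a)) = a + P(n), where P is the increasing enumeration of positive integers coprime to a and φ is Euler's totient function. -/

import Mathlib

/-- `P a n` is the `n`-th positive integer coprime to `a` (1-indexed). -/
noncomputable def P (a : ℕ) (n : ℕ) : ℕ :=
  Nat.nth (fun m => 0 < m ∧ Nat.Coprime m a) (n - 1)

theorem P_recurrence (a : ℕ) (ha : 0 < a) (n : ℕ) (hn : 1 ≤ n) :
    P a (n + Nat.totient a) = a + P a n := by
  classical
  set p : ℕ → Prop := fun m => 0 < m ∧ Nat.Coprime m a with hp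
  have hinf : (setOf p).Infinite := by
    apply Set.infinite_of_not_bddAbove
    rintro ⟨b, hb⟩
    have hmem : (b * a + 1) ∈ setOf p := by
      refine ⟨Nat.succ_pos _, ?_⟩
      simpa [Nat.Coprime, mul_comm] using
        ((Nat.coprime_one_left a).add_mul_left_left b)
    have := hb hmem
    have : b < b * a + 1 := by nlinarith
    omega
  -- count lemma
  have hcount : ∀ m : ℕ, 1 ≤ m → Nat.count p (m + a) = Nat.count p m + Nat.totient a := by
    intro m hm
    rw [Nat.count_eq_card_filter_range, Nat.count_eq_card_filter_range]
    rw [Finset.range_eq_Ico,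
      ← Finset.Ico_union_Ico_eq_Ico (Nat.zero_le m) (Nat.le_add_right m a),
      Finset.filter_union, Finset.card_union_of_disjoint]
    · congr 1
      · rw [Finset.range_eq_Ico]
      rw [← Nat.filter_coprime_Ico_eq_totient a m]
      apply Finset.card_bij (fun x _ => x)
      · intro x hx
        simp only [Finset.mem_filter] at hx ⊢
        exact ⟨hx.1, (Nat.coprime_comm.mp hx.2.2)⟩
      · intro x y _ _ h; exact h
      · intro x hx
        simp only [Finset.mem_filter, Finset.mem_Ico] at hx ⊢
        exact ⟨x, ⟨hx.1, by omega, Nat.coprime_comm.mp hx.2⟩, rfl⟩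
    · exact (Finset.Ico_disjoint_Ico_consecutive 0 m (m + a)).mono
        (Finset.filter_subset _ _) (Finset.filter_subset _ _)
  set k := n - 1 with hk
  have hkm : p (Nat.nth p k) := Nat.nth_mem_of_infinite hinf k
  set m := Nat.nth p k with hm
  have hpos : 1 ≤ m := hkm.1
  have hpx : p (m + a) := ⟨by omega, Nat.coprime_add_self_left.mpr hkm.2⟩
  have hc : Nat.count p (m + a) = k + Nat.totient a := by
    rw [hcount m hpos, Nat.count_nth_of_infinite hinf]
  have := Nat.nth_count hpx
  rw [hc] at this
  have hidx : n + Nat.totient a - 1 = k + Nat.totient a := by omega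
  show Nat.nth p (n + Nat.totient a - 1) = a + Nat.nth p (n - 1)
  rw [hidx, this, ← hk]
  omega
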